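/- Let Z_1,…,Z_n be iid standard normal, fix an integer k ≥ 1, and let Z_{n-k+1:n} be the k-th largest order statistic. With a_n = Φ⁻¹(1-1/n): P(Z_{n-k+1:n} ≤ a_n + t) → 0 for t < 0, → e^{-1}·Σ_{i=0}^{k-1} 1/i! for t = 0, and → 1 for t > 0, as n → ∞. -/

import Mathlib

open Filter MeasureTheory ProbabilityTheory

open Set Real

noncomputable def Phi (x : ℝ) : ℝ :=
  ∫ t in Set.Iic x, Real.exp (-t ^ 2 / 2) / Real.sqrt (2 * Real.pi)

noncomputable def PhiInv (p : ℝ) : ℝ := Function.invFun Phi p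

noncomputable def aSeq (n : ℕ) : ℝ := PhiInv (1 - 1 / n)

/-- The event that the k-th largest of Z_0,…,Z_{n-1} is ≤ x, i.e. at most k-1 of them
exceed x. -/
def kthMaxLe {Ω : Type*} (Z : ℕ → Ω → ℝ) (n k : ℕ) (x : ℝ) : Set Ω :=
  {ω | (((Finset.range n).filter (fun i => x < Z i ω)).card ≤ k - 1)}

lemma Phi_eq (x : ℝ) : Phi x = ∫ t in Set.Iic x, gaussianPDFReal 0 1 t := by
  unfold Phi gaussianPDFReal
  congr 1
  ext t
  rw [NNReal.coe_one]
  ring_nf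

lemma gauss_Iic (x : ℝ) : gaussianReal 0 1 (Set.Iic x) = ENNReal.ofReal (Phi x) := by
  rw [gaussianReal_apply_eq_integral 0 one_ne_zero, Phi_eq]

lemma Phi_nonneg (x : ℝ) : 0 ≤ Phi x := by
  rw [Phi_eq]
  exact MeasureTheory.setIntegral_nonneg measurableSet_Iic
    (fun t _ => gaussianPDFReal_nonneg 0 1 t)

lemma Phi_le_one (x : ℝ) : Phi x ≤ 1 := by
  have := measure_mono (μ := gaussianReal 0 1) (Set.subset_univ (Set.Iic x))
  rw [gauss_Iic, measure_univ] at this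
  exact (ENNReal.ofReal_le_one).mp this

lemma gauss_Ioi (x : ℝ) : gaussianReal 0 1 (Set.Ioi x) = ENNReal.ofReal (1 - Phi x) := by
  have hc : Set.Ioi x = (Set.Iic x)ᶜ := by simp
  rw [hc, measure_compl measurableSet_Iic (measure_ne_top _ _), measure_univ, gauss_Iic,
    ENNReal.ofReal_sub _ (Phi_nonneg x), ENNReal.ofReal_one]

lemma Phi_strictMono : StrictMono Phi := by
  intro a b hab
  have hint : IntegrableOn (gaussianPDFReal 0 1) (Set.Iic b) volume :=
    (integrable_gaussianPDFReal 0 1).integrableOn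
  have hint' : IntegrableOn (gaussianPDFReal 0 1) (Set.Iic a) volume :=
    (integrable_gaussianPDFReal 0 1).integrableOn
  have h2 : Phi b - Phi a = ∫ t in a..b, gaussianPDFReal 0 1 t := by
    rw [Phi_eq, Phi_eq]
    exact intervalIntegral.integral_Iic_sub_Iic hint' hint
  have h3 : 0 < ∫ t in a..b, gaussianPDFReal 0 1 t := by
    apply intervalIntegral.intervalIntegral_pos_of_pos_on
    · exact (integrable_gaussianPDFReal 0 1).intervalIntegrable
    · exact fun x _ => gaussianPDFReal_pos 0 1 x one_ne_zero
    · exact hab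
  linarith

lemma Phi_continuous : Continuous Phi := by
  have h := (integrable_gaussianPDFReal 0 1).continuous_primitive 0
  have : ∀ x, Phi x = Phi 0 + ∫ t in (0:ℝ)..x, gaussianPDFReal 0 1 t := by
    intro x
    have := intervalIntegral.integral_Iic_sub_Iic
      ((integrable_gaussianPDFReal 0 1).integrableOn (s := Set.Iic 0))
      ((integrable_gaussianPDFReal 0 1).integrableOn (s := Set.Iic x))
    rw [Phi_eq, Phi_eq]
    linarith
  rw [show Phi = fun x => Phi 0 + ∫ t in (0:ℝ)..x, gaussianPDFReal 0 1 t from funext this]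
  exact continuous_const.add h

lemma Phi_tendsto_atTop : Tendsto Phi atTop (nhds 1) := by
  have h := tendsto_measure_Iic_atTop (gaussianReal 0 1)
  rw [measure_univ] at h
  have h2 : Tendsto (fun x => (gaussianReal 0 1 (Set.Iic x)).toReal) atTop (nhds 1) := by
    have := (ENNReal.tendsto_toReal (by norm_num : (1:ENNReal) ≠ ⊤)).comp h
    simpa [Function.comp_def] using this
  refine h2.congr fun x => ?_
  rw [gauss_Iic, ENNReal.toReal_ofReal (Phi_nonneg x)]

lemma Phi_tendsto_atBot : Tendsto Phi atBot (nhds 0) := by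
  have h := tendsto_measure_Ici_atBot (gaussianReal 0 1)
  rw [measure_univ] at h
  have h2 : Tendsto (fun x : ℝ => (gaussianReal 0 1 (Set.Ici (x+1))).toReal) atBot (nhds 1) := by
    have := ((ENNReal.tendsto_toReal (by norm_num : (1:ENNReal) ≠ ⊤)).comp h).comp
      (tendsto_atBot_add_const_right atBot 1 tendsto_id)
    simpa [Function.comp_def] using this
  have hle : ∀ x : ℝ, Phi x ≤ 1 - (gaussianReal 0 1 (Set.Ici (x+1))).toReal := by
    intro x
    have hdisj : Disjoint (Set.Iic x) (Set.Ici (x+1)) :=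
      Set.Iic_disjoint_Ici.mpr (by linarith)
    have := measure_union_le (μ := gaussianReal 0 1) (Set.Iic x) (Set.Ici (x+1))
    have hunion : gaussianReal 0 1 (Set.Iic x ∪ Set.Ici (x+1)) ≤ 1 := prob_le_one
    have hsum : gaussianReal 0 1 (Set.Iic x) + gaussianReal 0 1 (Set.Ici (x+1)) ≤ 1 := by
      rw [← measure_union hdisj measurableSet_Ici]; exact prob_le_one
    have h1 : (gaussianReal 0 1 (Set.Iic x)).toReal
        + (gaussianReal 0 1 (Set.Ici (x+1))).toReal ≤ 1 := by
      rw [← ENNReal.toReal_add (measure_ne_top _ _) (measure_ne_top _ _)]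
      calc _ ≤ (1:ENNReal).toReal := ENNReal.toReal_mono (by norm_num) hsum
        _ = 1 := by simp
    have : (gaussianReal 0 1 (Set.Iic x)).toReal = Phi x := by
      rw [gauss_Iic, ENNReal.toReal_ofReal (Phi_nonneg x)]
    linarith
  have hlow : ∀ x : ℝ, (0:ℝ) ≤ Phi x := Phi_nonneg
  have : Tendsto (fun x : ℝ => 1 - (gaussianReal 0 1 (Set.Ici (x+1))).toReal) atBot (nhds 0) := by
    have := (tendsto_const_nhds (x := (1:ℝ)) (f := atBot)).sub h2
    simpa using this
  exact tendsto_of_tendsto_of_tendsto_of_le_of_le tendsto_const_nhds this hlow hle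

lemma Phi_surjOn : ∀ p ∈ Set.Ioo (0:ℝ) 1, ∃ x, Phi x = p := by
  intro p ⟨hp0, hp1⟩
  obtain ⟨a, ha⟩ := (Phi_tendsto_atBot.eventually (eventually_lt_nhds hp0)).exists
  obtain ⟨b, hb⟩ := (Phi_tendsto_atTop.eventually (eventually_gt_nhds hp1)).exists
  have hmem : p ∈ Set.uIcc (Phi a) (Phi b) := by
    rw [Set.uIcc_of_le (by linarith)]
    exact ⟨ha.le, hb.le⟩
  obtain ⟨x, _, hx⟩ := intermediate_value_uIcc (Phi_continuous.continuousOn (s := Set.uIcc a b)) hmem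
  exact ⟨x, hx⟩

lemma Phi_aSeq {n : ℕ} (hn : 2 ≤ n) : Phi (aSeq n) = 1 - 1 / n := by
  have hmem : (1 - 1 / (n:ℝ)) ∈ Set.Ioo (0:ℝ) 1 := by
    constructor
    · have : (1:ℝ)/n ≤ 1/2 := by
        apply div_le_div_of_nonneg_left one_pos.le two_pos
        exact_mod_cast hn
      linarith
    · have : (0:ℝ) < 1/n := by positivity
      linarith
  obtain ⟨x, hx⟩ := Phi_surjOn _ hmem
  rw [aSeq, PhiInv]
  exact Function.invFun_eq ⟨x, hx⟩

lemma aSeq_tendsto : Tendsto aSeq atTop atTop := by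
  rw [tendsto_atTop_atTop]
  intro M
  have hPM : Phi M < 1 := lt_of_lt_of_le (Phi_strictMono (lt_add_one M)) (Phi_le_one (M+1))
  have hpos : 0 < 1 - Phi M := by linarith
  obtain ⟨N0, hN0⟩ := exists_nat_gt (1 / (1 - Phi M))
  refine ⟨max 2 N0, fun n hn => ?_⟩
  have hn2 : 2 ≤ n := le_trans (le_max_left _ _) hn
  have hnN0 : (N0:ℝ) ≤ n := by exact_mod_cast le_trans (le_max_right _ _) hn
  have hnpos : (0:ℝ) < n := by positivity
  have hlt : 1 / (n:ℝ) < 1 - Phi M := by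
    rw [div_lt_iff₀ hnpos]
    calc 1 = (1 - Phi M) * (1 / (1 - Phi M)) := by field_simp
    _ < (1 - Phi M) * n := by
        apply mul_lt_mul_of_pos_left _ hpos
        linarith
  have : Phi M < Phi (aSeq n) := by
    rw [Phi_aSeq hn2]; linarith
  exact (Phi_strictMono.lt_iff_lt.mp this).le

-- tail inequality
lemma gauss_tail (x s : ℝ) (hs : 0 ≤ s) :
    1 - Phi (x + s) ≤ Real.exp (-(x * s)) * (1 - Phi x) := by
  have key : gaussianReal 0 1 (Set.Ioi (x + s))
      ≤ ENNReal.ofReal (Real.exp (-(x * s))) * gaussianReal 0 1 (Set.Ioi x) := by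
    rw [gaussianReal_apply 0 one_ne_zero, gaussianReal_apply 0 one_ne_zero]
    have hcv : ∫⁻ u in Set.Ioi (x + s), gaussianPDF 0 1 u
        = ∫⁻ u in Set.Ioi x, gaussianPDF 0 1 (u + s) := by
      have hpre : (fun u : ℝ => u + s) ⁻¹' Set.Ioi (x + s) = Set.Ioi x := by
        ext u; simp
      rw [← hpre]
      exact ((measurePreserving_add_right volume s).setLIntegral_comp_preimage_emb
        (measurableEmbedding_addRight s) _ _).symm
    rw [hcv, ← MeasureTheory.lintegral_const_mul _ (measurable_gaussianPDF 0 1)]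
    apply MeasureTheory.setLIntegral_mono
      ((measurable_const.mul (measurable_gaussianPDF 0 1)))
    intro u hu
    simp only [Set.mem_Ioi] at hu
    unfold gaussianPDF
    simp only [Pi.mul_apply]
    rw [← ENNReal.ofReal_mul (Real.exp_nonneg _)]
    apply ENNReal.ofReal_le_ofReal
    unfold gaussianPDFReal
    simp only [NNReal.coe_one, sub_zero, mul_one]
    rw [mul_comm (Real.exp (-(x*s))), mul_assoc]
    apply mul_le_mul_of_nonneg_left _ (by positivity)
    rw [← Real.exp_add, Real.exp_le_exp]
    have h1 : x * s ≤ u * s := mul_le_mul_of_nonneg_right hu.le hs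
    nlinarith [sq_nonneg s]
  rw [gauss_Ioi, gauss_Ioi, ← ENNReal.ofReal_mul (Real.exp_nonneg _)] at key
  have h1 : 0 ≤ Real.exp (-(x*s)) * (1 - Phi x) :=
    mul_nonneg (Real.exp_nonneg _) (by linarith [Phi_le_one x])
  exact (ENNReal.ofReal_le_ofReal_iff h1).mp key

lemma meas_kthMaxLe {Ω : Type*} [MeasureSpace Ω] [IsProbabilityMeasure (ℙ : Measure Ω)]
    (Z : ℕ → Ω → ℝ) (hmeas : ∀ i, Measurable (Z i))
    (hindep : iIndepFun Z (ℙ : Measure Ω))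
    (hlaw : ∀ i, Measure.map (Z i) (ℙ : Measure Ω) = gaussianReal 0 1)
    (k : ℕ) (hk : 1 ≤ k) (x : ℝ) (n : ℕ) :
    ((ℙ : Measure Ω) (kthMaxLe Z n k x)).toReal
      = ∑ j ∈ Finset.range k, (n.choose j : ℝ) * (1 - Phi x)^j * (Phi x)^(n - j) := by
  classical
  set p : ENNReal := ENNReal.ofReal (1 - Phi x) with hp
  set r : ENNReal := ENNReal.ofReal (Phi x) with hr
  set A : Finset ℕ → Set Ω :=
    fun S => ⋂ i ∈ Finset.range n, Z i ⁻¹' (if i ∈ S then Set.Ioi x else Set.Iic x) with hA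
  set D : Finset (Finset ℕ) :=
    (Finset.range n).powerset.filter (fun S => S.card < k) with hD
  have hmemA : ∀ (S : Finset ℕ) (ω : Ω),
      ω ∈ A S ↔ ∀ i ∈ Finset.range n, (x < Z i ω ↔ i ∈ S) := by
    intro S ω
    simp only [hA, Set.mem_iInter, Set.mem_preimage]
    constructor
    · intro h i hi
      have := h i hi
      by_cases hiS : i ∈ S
      · simp only [hiS, if_true, Set.mem_Ioi] at this
        exact ⟨fun _ => hiS, fun _ => this⟩
      · simp only [hiS, if_false, Set.mem_Iic] at this
        exact ⟨fun hx' => absurd hx' (not_lt.mpr this), fun h' => absurd h' hiS⟩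
    · intro h i hi
      by_cases hiS : i ∈ S
      · simp only [hiS, if_true, Set.mem_Ioi]
        exact (h i hi).mpr hiS
      · simp only [hiS, if_false, Set.mem_Iic]
        exact not_lt.mp (fun hx' => hiS ((h i hi).mp hx'))
  have hfilter : ∀ (S : Finset ℕ) (ω : Ω), S ⊆ Finset.range n → ω ∈ A S →
      (Finset.range n).filter (fun i => x < Z i ω) = S := by
    intro S ω hsub hω
    ext i
    simp only [Finset.mem_filter]
    constructor
    · rintro ⟨hi, hx'⟩
      exact ((hmemA S ω).mp hω i hi).mp hx'
    · intro hiS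
      have hi : i ∈ Finset.range n := hsub hiS
      exact ⟨hi, ((hmemA S ω).mp hω i hi).mpr hiS⟩
  have hevent : kthMaxLe Z n k x = ⋃ S ∈ D, A S := by
    ext ω
    simp only [kthMaxLe, Set.mem_setOf_eq, Set.mem_iUnion, exists_prop]
    constructor
    · intro h
      refine ⟨(Finset.range n).filter (fun i => x < Z i ω), ?_, ?_⟩
      · simp only [hD, Finset.mem_filter, Finset.mem_powerset]
        exact ⟨Finset.filter_subset _ _, by omega⟩
      · rw [hmemA]
        intro i hi
        simp [Finset.mem_filter, hi]
    · rintro ⟨S, hS, hω⟩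
      simp only [hD, Finset.mem_filter, Finset.mem_powerset] at hS
      rw [hfilter S ω hS.1 hω]
      omega
  have hAmeas : ∀ S : Finset ℕ, MeasurableSet (A S) := by
    intro S
    apply MeasurableSet.biInter (Finset.range n).countable_toSet
    intro i _
    apply (hmeas i)
    split_ifs
    · exact measurableSet_Ioi
    · exact measurableSet_Iic
  have hdisj : (D : Set (Finset ℕ)).PairwiseDisjoint A := by
    intro S hS T hT hST
    simp only [hD, Finset.coe_filter, Set.mem_setOf_eq, Finset.mem_powerset] at hS hT
    rw [Function.onFun, Set.disjoint_left]
    intro ω hωS hωT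
    exact hST (by rw [← hfilter S ω hS.1 hωS, hfilter T ω hT.1 hωT])
  have hmeasA : ∀ S ∈ D, (ℙ : Measure Ω) (A S) = p ^ S.card * r ^ (n - S.card) := by
    intro S hS
    simp only [hD, Finset.mem_filter, Finset.mem_powerset] at hS
    have := hindep.measure_inter_preimage_eq_mul (Finset.range n)
      (sets := fun i => if i ∈ S then Set.Ioi x else Set.Iic x)
      (fun i _ => by
        show MeasurableSet (if i ∈ S then Set.Ioi x else Set.Iic x)
        split_ifs; exacts [measurableSet_Ioi, measurableSet_Iic])
    rw [hA]
    rw [this]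
    have hfac : ∀ i, (ℙ : Measure Ω) (Z i ⁻¹' (if i ∈ S then Set.Ioi x else Set.Iic x))
        = if i ∈ S then p else r := by
      intro i
      have hmap : ∀ (s : Set ℝ), MeasurableSet s →
          (ℙ : Measure Ω) (Z i ⁻¹' s) = gaussianReal 0 1 s := by
        intro s hs
        rw [← hlaw i, Measure.map_apply (hmeas i) hs]
      split_ifs
      · rw [hmap _ measurableSet_Ioi, gauss_Ioi]
      · rw [hmap _ measurableSet_Iic, gauss_Iic]
    calc ∏ i ∈ Finset.range n, (ℙ : Measure Ω) (Z i ⁻¹' (if i ∈ S then Set.Ioi x else Set.Iic x))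
        = ∏ i ∈ Finset.range n, (if i ∈ S then p else r) := by
          exact Finset.prod_congr rfl (fun i _ => hfac i)
      _ = (∏ i ∈ S, (if i ∈ S then p else r))
          * ∏ i ∈ Finset.range n \ S, (if i ∈ S then p else r) := by
          rw [← Finset.prod_sdiff hS.1, mul_comm]
      _ = p ^ S.card * r ^ (n - S.card) := by
          rw [Finset.prod_congr rfl (fun i hi => if_pos hi),
            Finset.prod_congr rfl (fun i hi => if_neg (Finset.mem_sdiff.mp hi).2),
            Finset.prod_const, Finset.prod_const, Finset.card_sdiff_of_subset hS.1, Finset.card_range]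
  have hmeasure : (ℙ : Measure Ω) (kthMaxLe Z n k x)
      = ∑ j ∈ Finset.range k, (n.choose j : ENNReal) * (p ^ j * r ^ (n - j)) := by
    rw [hevent, measure_biUnion_finset hdisj (fun S _ => hAmeas S)]
    rw [Finset.sum_congr rfl hmeasA]
    have hmap : ∀ S ∈ D, S.card ∈ Finset.range k := fun S hS => by
      simp only [hD, Finset.mem_filter] at hS; exact Finset.mem_range.mpr hS.2
    have hfw := Finset.sum_fiberwise_of_maps_to hmap
      (fun S : Finset ℕ => p ^ S.card * r ^ (n - S.card))
    rw [← hfw]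
    refine Finset.sum_congr rfl (fun j hj => ?_)
    have hfib : D.filter (fun S => S.card = j) = (Finset.range n).powersetCard j := by
      ext S
      simp only [hD, Finset.mem_filter, Finset.mem_powerset, Finset.mem_powersetCard]
      rw [Finset.mem_range] at hj
      constructor
      · rintro ⟨⟨h1, _⟩, h3⟩; exact ⟨h1, h3⟩
      · rintro ⟨h1, h2⟩; exact ⟨⟨h1, h2 ▸ hj⟩, h2⟩
    rw [hfib]
    rw [Finset.sum_congr rfl (fun S hS => by
      rw [(Finset.mem_powersetCard.mp hS).2])]
    rw [Finset.sum_const, Finset.card_powersetCard, Finset.card_range, nsmul_eq_mul]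
  rw [hmeasure, ENNReal.toReal_sum (fun j _ => by
    apply ENNReal.mul_ne_top (by simp)
    exact ENNReal.mul_ne_top (ENNReal.pow_ne_top ENNReal.ofReal_ne_top)
      (ENNReal.pow_ne_top ENNReal.ofReal_ne_top))]
  refine Finset.sum_congr rfl (fun j _ => ?_)
  rw [ENNReal.toReal_mul, ENNReal.toReal_mul, ENNReal.toReal_pow, ENNReal.toReal_pow,
    ENNReal.toReal_natCast, hp, hr, ENNReal.toReal_ofReal (by linarith [Phi_le_one x]),
    ENNReal.toReal_ofReal (Phi_nonneg x), mul_assoc]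

-- (L1a)
lemma choose_div_pow_tendsto (j : ℕ) :
    Tendsto (fun n : ℕ => (n.choose j : ℝ) / (n:ℝ)^j) atTop (nhds (1 / (Nat.factorial j : ℝ))) := by
  have hlim : Tendsto (fun n : ℕ => (1 / (Nat.factorial j : ℝ))
      * ∏ i ∈ Finset.range j, (1 - (i:ℝ)/(n:ℝ))) atTop (nhds (1 / (Nat.factorial j : ℝ))) := by
    have hprod : Tendsto (fun n : ℕ => ∏ i ∈ Finset.range j, (1 - (i:ℝ)/(n:ℝ)))
        atTop (nhds 1) := by
      have : Tendsto (fun n : ℕ => ∏ i ∈ Finset.range j, (1 - (i:ℝ)/(n:ℝ)))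
          atTop (nhds (∏ i ∈ Finset.range j, (1:ℝ))) := by
        apply tendsto_finset_prod
        intro i _
        have := tendsto_const_div_atTop_nhds_zero_nat (i:ℝ)
        have h2 := (tendsto_const_nhds (x := (1:ℝ)) (f := atTop)).sub this
        simpa using h2
      simpa using this
    have := (tendsto_const_nhds (x := 1 / (Nat.factorial j : ℝ)) (f := atTop)).mul hprod
    simpa using this
  apply hlim.congr'
  filter_upwards [eventually_ge_atTop (max j 1)] with n hn
  have hj : j ≤ n := le_trans (le_max_left _ _) hn
  have hn1 : 1 ≤ n := le_trans (le_max_right _ _) hn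
  have hnR : (0:ℝ) < n := by exact_mod_cast hn1
  have hcast : (n.choose j : ℝ) * (Nat.factorial j : ℝ) = ∏ i ∈ Finset.range j, ((n:ℝ) - i) := by
    have h1 : n.choose j * Nat.factorial j = n.descFactorial j := by
      rw [Nat.descFactorial_eq_factorial_mul_choose, mul_comm]
    have h2 : (n.descFactorial j : ℝ) = ∏ i ∈ Finset.range j, ((n:ℝ) - i) := by
      rw [Nat.descFactorial_eq_prod_range]
      push_cast
      apply Finset.prod_congr rfl
      intro i hi
      rw [Nat.cast_sub (le_trans (Finset.mem_range.mp hi).le hj)]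
    rw [← h2]
    exact_mod_cast congrArg (Nat.cast : ℕ → ℝ) h1
  have hfac : (0:ℝ) < (Nat.factorial j : ℝ) := by exact_mod_cast Nat.factorial_pos j
  have hprod_eq : ∏ i ∈ Finset.range j, (1 - (i:ℝ)/(n:ℝ))
      = ((n.choose j : ℝ) * (Nat.factorial j : ℝ)) / (n:ℝ)^j := by
    calc ∏ i ∈ Finset.range j, (1 - (i:ℝ)/(n:ℝ))
        = ∏ i ∈ Finset.range j, (((n:ℝ) - i)/(n:ℝ)) :=
          Finset.prod_congr rfl (fun i _ => by field_simp)
      _ = (∏ i ∈ Finset.range j, ((n:ℝ) - i)) / (n:ℝ)^j := by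
          rw [Finset.prod_div_distrib, Finset.prod_const, Finset.card_range]
      _ = ((n.choose j : ℝ) * (Nat.factorial j : ℝ)) / (n:ℝ)^j := by rw [hcast]
  rw [hprod_eq]
  field_simp

-- (L1b)
lemma one_sub_inv_pow_tendsto (j : ℕ) :
    Tendsto (fun n : ℕ => (1 - 1/(n:ℝ))^(n - j)) atTop (nhds (Real.exp (-1))) := by
  have h1 : Tendsto (fun n : ℕ => (1 + (-1)/(n:ℝ))^n) atTop (nhds (Real.exp (-1))) :=
    Real.tendsto_one_add_div_pow_exp (-1)
  have h2 : Tendsto (fun n : ℕ => (1 - 1/(n:ℝ))^j) atTop (nhds 1) := by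
    have hb : Tendsto (fun n : ℕ => 1 - 1/(n:ℝ)) atTop (nhds 1) := by
      have := tendsto_const_div_atTop_nhds_zero_nat (1:ℝ)
      have h2 := (tendsto_const_nhds (x := (1:ℝ)) (f := atTop)).sub this
      simpa using h2
    simpa using hb.pow j
  have h3 := h1.div h2 one_ne_zero
  rw [div_one] at h3
  apply h3.congr'
  filter_upwards [eventually_ge_atTop (max (j+1) 2)] with n hn
  have hj : j ≤ n := by omega
  have hn2 : 2 ≤ n := le_trans (le_max_right _ _) hn
  have hb : (1 - 1/(n:ℝ)) ≠ 0 := by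
    have : (2:ℝ) ≤ n := by exact_mod_cast hn2
    have : 1/(n:ℝ) ≤ 1/2 := by
      apply div_le_div_of_nonneg_left one_pos.le two_pos this
    intro h; rw [sub_eq_zero] at h; rw [← h] at this; norm_num at this
  show (1 + (-1)/(n:ℝ))^n / (1 - 1/(n:ℝ))^j = (1 - 1/(n:ℝ))^(n-j)
  rw [show (1 + (-1)/(n:ℝ)) = 1 - 1/(n:ℝ) by ring, pow_sub₀ _ hb hj, div_eq_mul_inv]

lemma cast_sub_le_cast_sub (n j : ℕ) : (n:ℝ) - (j:ℝ) ≤ ((n - j : ℕ):ℝ) := by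
  rcases le_total j n with h | h
  · rw [Nat.cast_sub h]
  · rw [Nat.sub_eq_zero_of_le h]
    push_cast
    have : (n:ℝ) ≤ j := by exact_mod_cast h
    linarith

lemma term_bound (n j : ℕ) (P : ℝ) (h0 : 0 ≤ P) (h1 : P ≤ 1) :
    (n.choose j:ℝ) * P^j * (1-P)^(n-j)
      ≤ ((n:ℝ)*P)^j * Real.exp j * Real.exp (-((n:ℝ)*P)) := by
  have c1 : (n.choose j:ℝ) ≤ (n:ℝ)^j := by exact_mod_cast Nat.choose_le_pow n j
  have c2 : (1-P)^(n-j) ≤ Real.exp (-(P * ((n - j : ℕ):ℝ))) := by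
    calc (1-P)^(n-j) ≤ (Real.exp (-P))^(n-j) := by
          apply pow_le_pow_left₀ (by linarith)
          linarith [Real.add_one_le_exp (-P)]
      _ = Real.exp (-(P * ((n - j : ℕ):ℝ))) := by
          rw [← Real.exp_nat_mul]; ring_nf
  have c3 : Real.exp (-(P * ((n - j : ℕ):ℝ))) ≤ Real.exp j * Real.exp (-((n:ℝ)*P)) := by
    rw [← Real.exp_add, Real.exp_le_exp]
    have hc := cast_sub_le_cast_sub n j
    nlinarith [Nat.cast_nonneg (α := ℝ) j]
  calc (n.choose j:ℝ) * P^j * (1-P)^(n-j)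
      ≤ (n:ℝ)^j * P^j * (1-P)^(n-j) := by
        apply mul_le_mul_of_nonneg_right (mul_le_mul_of_nonneg_right c1 (by positivity))
        exact pow_nonneg (by linarith) _
    _ ≤ (n:ℝ)^j * P^j * (Real.exp j * Real.exp (-((n:ℝ)*P))) := by
        apply mul_le_mul_of_nonneg_left (le_trans c2 c3) (by positivity)
    _ = ((n:ℝ)*P)^j * Real.exp j * Real.exp (-((n:ℝ)*P)) := by
        rw [mul_pow]; ring

lemma case_neg (k : ℕ) (P : ℕ → ℝ) (h01 : ∀ᶠ n in atTop, 0 ≤ P n ∧ P n ≤ 1)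
    (hq : Tendsto (fun n : ℕ => (n:ℝ) * P n) atTop atTop) :
    Tendsto (fun n : ℕ => ∑ j ∈ Finset.range k, (n.choose j:ℝ) * (P n)^j * (1-P n)^(n-j))
      atTop (nhds 0) := by
  have hg : Tendsto (fun y : ℝ => ∑ j ∈ Finset.range k, y^j * Real.exp j * Real.exp (-y))
      atTop (nhds 0) := by
    have : Tendsto (fun y : ℝ => ∑ j ∈ Finset.range k, y^j * Real.exp j * Real.exp (-y))
        atTop (nhds (∑ j ∈ Finset.range k, (0:ℝ))) := by
      apply tendsto_finset_sum
      intro j _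
      have h1 := tendsto_pow_mul_exp_neg_atTop_nhds_zero j
      have h2 := h1.const_mul (Real.exp j)
      rw [mul_zero] at h2
      refine h2.congr fun y => by ring
    simpa using this
  have hcomp := hg.comp hq
  apply squeeze_zero'
  · filter_upwards [h01] with n hn
    apply Finset.sum_nonneg
    intro j _
    have h2 : (0:ℝ) ≤ 1 - P n := by linarith [hn.2]
    exact mul_nonneg (mul_nonneg (by positivity) (pow_nonneg hn.1 _)) (pow_nonneg h2 _)
  · filter_upwards [h01] with n hn
    apply Finset.sum_le_sum
    intro j _
    exact term_bound n j (P n) hn.1 hn.2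
  · exact hcomp

lemma case_pos (k : ℕ) (hk : 1 ≤ k) (P : ℕ → ℝ) (h01 : ∀ᶠ n in atTop, 0 ≤ P n ∧ P n ≤ 1)
    (hub : ∀ᶠ n in atTop,
      ∑ j ∈ Finset.range k, (n.choose j:ℝ) * (P n)^j * (1-P n)^(n-j) ≤ 1)
    (hq : Tendsto (fun n : ℕ => (n:ℝ) * P n) atTop (nhds 0)) :
    Tendsto (fun n : ℕ => ∑ j ∈ Finset.range k, (n.choose j:ℝ) * (P n)^j * (1-P n)^(n-j))
      atTop (nhds 1) := by
  have hlo : Tendsto (fun n : ℕ => 1 - (n:ℝ) * P n) atTop (nhds 1) := by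
    have := (tendsto_const_nhds (x := (1:ℝ)) (f := atTop)).sub hq
    simpa using this
  apply tendsto_of_tendsto_of_tendsto_of_le_of_le' hlo tendsto_const_nhds
  · filter_upwards [h01] with n hn
    have hb : 1 - (n:ℝ) * P n ≤ (1 - P n)^n := by
      have := one_add_mul_le_pow (a := -P n) (by linarith [hn.2]) n
      calc 1 - (n:ℝ) * P n = 1 + (n:ℝ) * (-P n) := by ring
        _ ≤ (1 + (-P n))^n := this
        _ = (1 - P n)^n := by ring_nf
    have hterm : (1 - P n)^n
        = (n.choose 0:ℝ) * (P n)^0 * (1-P n)^(n-0) := by simp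
    have hsum : (n.choose 0:ℝ) * (P n)^0 * (1-P n)^(n-0)
        ≤ ∑ j ∈ Finset.range k, (n.choose j:ℝ) * (P n)^j * (1-P n)^(n-j) := by
      apply Finset.single_le_sum (f := fun j => (n.choose j:ℝ) * (P n)^j * (1-P n)^(n-j))
      · intro j _
        have h2 : (0:ℝ) ≤ 1 - P n := by linarith [hn.2]
        exact mul_nonneg (mul_nonneg (by positivity) (pow_nonneg hn.1 _)) (pow_nonneg h2 _)
      · exact Finset.mem_range.mpr hk
    linarith
  · exact hub

lemma case_zero (k : ℕ) :
    Tendsto (fun n : ℕ => ∑ j ∈ Finset.range k, (n.choose j:ℝ) * (1/(n:ℝ))^j * (1-1/(n:ℝ))^(n-j))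
      atTop (nhds (Real.exp (-1) * ∑ i ∈ Finset.range k, 1 / (Nat.factorial i : ℝ))) := by
  have : Tendsto (fun n : ℕ => ∑ j ∈ Finset.range k, (n.choose j:ℝ) * (1/(n:ℝ))^j * (1-1/(n:ℝ))^(n-j))
      atTop (nhds (∑ j ∈ Finset.range k, (1 / (Nat.factorial j : ℝ)) * Real.exp (-1))) := by
    apply tendsto_finset_sum
    intro j _
    have h1 := (choose_div_pow_tendsto j).mul (one_sub_inv_pow_tendsto j)
    apply h1.congr
    intro n
    rw [div_pow, one_pow]
    ring_nf
  convert this using 2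
  rw [Finset.mul_sum]
  exact Finset.sum_congr rfl (fun j _ => by ring)

theorem stmt17 {Ω : Type*} [MeasureSpace Ω] [IsProbabilityMeasure (ℙ : Measure Ω)]
    (Z : ℕ → Ω → ℝ) (hmeas : ∀ i, Measurable (Z i))
    (hindep : iIndepFun Z (ℙ : Measure Ω))
    (hlaw : ∀ i, Measure.map (Z i) (ℙ : Measure Ω) = gaussianReal 0 1)
    (k : ℕ) (hk : 1 ≤ k) (t : ℝ) :
    (t < 0 → Tendsto (fun n : ℕ => ((ℙ : Measure Ω) (kthMaxLe Z n k (aSeq n + t))).toReal)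
        atTop (nhds 0)) ∧
    (t = 0 → Tendsto (fun n : ℕ => ((ℙ : Measure Ω) (kthMaxLe Z n k (aSeq n + t))).toReal)
        atTop (nhds (Real.exp (-1) * ∑ i ∈ Finset.range k, 1 / (Nat.factorial i : ℝ)))) ∧
    (0 < t → Tendsto (fun n : ℕ => ((ℙ : Measure Ω) (kthMaxLe Z n k (aSeq n + t))).toReal)
        atTop (nhds 1)) := by
  set P : ℕ → ℝ := fun n => 1 - Phi (aSeq n + t) with hP
  have heq : ∀ n : ℕ, ((ℙ : Measure Ω) (kthMaxLe Z n k (aSeq n + t))).toReal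
      = ∑ j ∈ Finset.range k, (n.choose j:ℝ) * (P n)^j * (1-P n)^(n-j) := by
    intro n
    rw [meas_kthMaxLe Z hmeas hindep hlaw k hk (aSeq n + t) n]
    refine Finset.sum_congr rfl (fun j _ => ?_)
    rw [hP]
    ring_nf
  have h01 : ∀ᶠ n in atTop, 0 ≤ P n ∧ P n ≤ 1 :=
    Eventually.of_forall (fun n =>
      ⟨by simp [hP]; linarith [Phi_le_one (aSeq n + t)],
       by simp [hP]; linarith [Phi_nonneg (aSeq n + t)]⟩)
  have hinv : ∀ᶠ n in atTop, 1 - Phi (aSeq n) = 1/(n:ℝ) := by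
    filter_upwards [eventually_ge_atTop 2] with n hn
    rw [Phi_aSeq hn]; ring
  refine ⟨fun ht => ?_, fun ht => ?_, fun ht => ?_⟩
  · -- t < 0
    set s : ℝ := -t with hs
    have hs0 : 0 < s := by simp [hs]; linarith
    have hq : Tendsto (fun n : ℕ => (n:ℝ) * P n) atTop atTop := by
      have hexp : Tendsto (fun n : ℕ => Real.exp ((aSeq n + t) * s)) atTop atTop := by
        apply Real.tendsto_exp_atTop.comp
        exact (tendsto_atTop_add_const_right atTop t aSeq_tendsto).atTop_mul_const hs0
      apply tendsto_atTop_mono' _ _ hexp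
      filter_upwards [hinv, eventually_ge_atTop 2] with n hn hn2
      have hn0 : (0:ℝ) < n := by positivity
      have htail := gauss_tail (aSeq n + t) s hs0.le
      rw [show aSeq n + t + s = aSeq n by rw [hs]; ring, hn] at htail
      have hc := Real.exp_pos ((aSeq n + t) * s)
      have h2 : Real.exp ((aSeq n + t) * s) * (1/(n:ℝ)) ≤ P n := by
        calc Real.exp ((aSeq n + t) * s) * (1/(n:ℝ))
            ≤ Real.exp ((aSeq n + t) * s) * (Real.exp (-((aSeq n + t) * s)) * P n) :=
              mul_le_mul_of_nonneg_left htail hc.le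
          _ = P n := by rw [← mul_assoc, ← Real.exp_add]; simp
      calc Real.exp ((aSeq n + t) * s)
          = Real.exp ((aSeq n + t) * s) * (1/(n:ℝ)) * n := by field_simp
        _ ≤ P n * n := mul_le_mul_of_nonneg_right h2 hn0.le
        _ = (n:ℝ) * P n := mul_comm _ _
    have := case_neg k P h01 hq
    exact Tendsto.congr (fun n => (heq n).symm) this
  · -- t = 0
    have hPn : ∀ᶠ n in atTop, P n = 1/(n:ℝ) := by
      filter_upwards [hinv] with n hn
      rw [hP, ht]
      simpa using hn
    have := case_zero k
    refine Tendsto.congr' ?_ this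
    filter_upwards [hPn] with n hn
    rw [heq n, hn]
  · -- t > 0
    have hq : Tendsto (fun n : ℕ => (n:ℝ) * P n) atTop (nhds 0) := by
      have hexp : Tendsto (fun n : ℕ => Real.exp (-(aSeq n * t))) atTop (nhds 0) := by
        apply Real.tendsto_exp_atBot.comp
        exact tendsto_neg_atBot_iff.mpr (aSeq_tendsto.atTop_mul_const ht)
      refine squeeze_zero' ?_ ?_ hexp
      · filter_upwards [h01] with n hn
        have h0n : (0:ℝ) ≤ n := by positivity
        exact mul_nonneg h0n hn.1
      · filter_upwards [hinv, eventually_ge_atTop 2] with n hn hn2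
        have hn0 : (0:ℝ) < n := by positivity
        have htail := gauss_tail (aSeq n) t ht.le
        rw [hn] at htail
        calc (n:ℝ) * P n ≤ (n:ℝ) * (Real.exp (-(aSeq n * t)) * (1/(n:ℝ))) :=
              mul_le_mul_of_nonneg_left htail hn0.le
          _ = Real.exp (-(aSeq n * t)) := by field_simp
    have hub : ∀ᶠ n in atTop,
        ∑ j ∈ Finset.range k, (n.choose j:ℝ) * (P n)^j * (1-P n)^(n-j) ≤ 1 := by
      apply Eventually.of_forall
      intro n
      rw [← heq n]
      have h1 : (ℙ : Measure Ω) (kthMaxLe Z n k (aSeq n + t)) ≤ 1 := prob_le_one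
      calc ((ℙ : Measure Ω) (kthMaxLe Z n k (aSeq n + t))).toReal
          ≤ (1:ENNReal).toReal := ENNReal.toReal_mono (by norm_num) h1
        _ = 1 := by simp
    have := case_pos k hk P h01 hub hq
    exact Tendsto.congr (fun n => (heq n).symm) this
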